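/- arXiv:2410.11754 — 2 statements merged into one kernel-verified Lean document; each statement's English description precedes it below -/
import Mathlib

section
/- Let Γ, B, and C be countable groups and suppose the p.m.p. actions B ↷ (Y,ν) and C ↷ (Z,η) on standard probability spaces are orbit equivalent, witnessed by a measure space isomorphism φ:(Y,ν)→(Z,η) with φ(B·y) = C·φ(y) for a.e. y ∈ Y. Then the coordinatewise map φ^Γ: (Y^Γ, ν^Γ) → (Z^Γ, η^Γ), defined by (φ^Γ(y))_γ = φ(y_γ), is an orbit equivalence between the associated wreath product actions B≀Γ ↷ (Y^Γ, ν^Γ) and C≀Γ ↷ (Z^Γ, η^Γ); in particular, these wreath product actions are orbit equivalent. -/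
/-!  Common definitions: wreath products, measured group actions, orbit equivalence,
measure equivalence, measurable splittings, cocycle superrigidity, and cofinitely
equivariant maps.  -/

open MeasureTheory Function Filter Set
open scoped ENNReal

namespace OEW


/-! ### Restricted direct sums and wreath products of groups -/

/-- The restricted direct sum `⊕_V B`: the subgroup of `V → B` consisting of finitely
supported functions (support = coordinates where the value is not `1`). -/
def dsum (V B : Type) [Group B] : Subgroup (V → B) where
  carrier := {f | (Function.mulSupport f).Finite}
  one_mem' := by
    simp
  mul_mem' := fun {f g} hf hg =>
    Set.Finite.subset (Set.Finite.union hf hg) (Function.mulSupport_mul f g)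
  inv_mem' := fun {f} hf => by simpa [Function.mulSupport_inv] using hf

variable {V B Γ : Type}

/-- The shift of a finitely supported function by `γ`. -/
def shiftSubtype [Group B] [Group Γ] [MulAction Γ V] (γ : Γ) (f : dsum V B) : dsum V B :=
  ⟨fun v => (f : V → B) (γ⁻¹ • v), by
    have h : (Function.mulSupport fun v => (f : V → B) (γ⁻¹ • v)) ⊆
        (fun v => γ⁻¹ • v) ⁻¹' Function.mulSupport (f : V → B) := fun v hv => hv
    exact Set.Finite.subset
      (Set.Finite.preimage ((MulAction.injective (γ⁻¹ : Γ)).injOn) f.2) h⟩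

/-- The shift by `γ` as an automorphism of the restricted direct sum. -/
def shiftEquiv [Group B] [Group Γ] [MulAction Γ V] (γ : Γ) : dsum V B ≃* dsum V B where
  toFun := shiftSubtype γ
  invFun := shiftSubtype γ⁻¹
  left_inv f := Subtype.ext (funext fun v => by simp [shiftSubtype])
  right_inv f := Subtype.ext (funext fun v => by simp [shiftSubtype])
  map_mul' f g := rfl

/-- The left shift action of `Γ` on `⊕_V B` as a homomorphism into the automorphism group. -/
def shiftHom (V B Γ : Type) [Group B] [Group Γ] [MulAction Γ V] :
    Γ →* MulAut (dsum V B) where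
  toFun γ := shiftEquiv γ
  map_one' := MulEquiv.ext fun f => Subtype.ext (funext fun v => by
    simp [shiftEquiv, shiftSubtype])
  map_mul' γ₁ γ₂ := MulEquiv.ext fun f => Subtype.ext (funext fun v => by
    simp [shiftEquiv, shiftSubtype, mul_smul] <;> rfl)

/-- The (restricted) permutational wreath product `B ≀_V Γ = (⊕_V B) ⋊ Γ`. -/
abbrev pwreath (V B Γ : Type) [Group B] [Group Γ] [MulAction Γ V] : Type :=
  SemidirectProduct (dsum V B) Γ (shiftHom V B Γ)

/-- The (restricted) regular wreath product `B ≀ Γ = (⊕_Γ B) ⋊ Γ`. -/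
abbrev wreath (B Γ : Type) [Group B] [Group Γ] : Type := pwreath Γ B Γ


/-- The shift ("generalized Bernoulli") action on `V → X`. -/
def shiftS [Group Γ] [MulAction Γ V] (γ : Γ) (x : V → X) : V → X :=
  fun v => x (γ⁻¹ • v)

variable {V B C Γ X Y Z : Type}

/-- The wreath product action: given an action `β : B → X → X`, the induced action of the
wreath product `B ≀_V Γ` on `V → X`. -/
def wreathSmul [Group B] [Group Γ] [MulAction Γ V] (β : B → X → X)
    (g : pwreath V B Γ) (x : V → X) : V → X :=
  fun v => β ((g.left : V → B) v) (x (g.right⁻¹ • v))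

/-- The coordinatewise action of the restricted direct sum `⊕_V B` on `V → X`. -/
def dsumSmul [Group B] (β : B → X → X) (b : dsum V B) (x : V → X) : V → X :=
  fun v => β ((b : V → B) v) (x v)

/-! ### Measured group actions, given by explicit action maps -/

/-- `a` is a measure preserving group action of `G` on `(X, μ)`. -/
def IsMpAction {G : Type} [Group G] [MeasurableSpace X] (a : G → X → X) (μ : Measure X) : Prop :=
  (∀ x, a 1 x = x) ∧ (∀ g h x, a (g * h) x = a g (a h x)) ∧ ∀ g, MeasurePreserving (a g) μ μ

/-- A probability measure preserving (p.m.p.) action. -/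
def IsPmpAction {G : Type} [Group G] [MeasurableSpace X] (a : G → X → X) (μ : Measure X) : Prop :=
  IsProbabilityMeasure μ ∧ IsMpAction a μ

/-- The action is (essentially) free. -/
def IsFreeAction {G : Type} [Group G] [MeasurableSpace X] (a : G → X → X) (μ : Measure X) : Prop :=
  ∀ᵐ x ∂μ, ∀ g : G, a g x = x → g = 1

/-- The action is ergodic: every invariant measurable set is null or conull. -/
def IsErgodicAction {G : Type} [Group G] [MeasurableSpace X] (a : G → X → X) (μ : Measure X) :
    Prop :=
  ∀ A : Set X, MeasurableSet A → (∀ g : G, a g ⁻¹' A = A) → μ A = 0 ∨ μ Aᶜ = 0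

/-- The action is totally ergodic: every infinite subgroup acts ergodically. -/
def IsTotallyErgodic {G : Type} [Group G] [MeasurableSpace X] (a : G → X → X) (μ : Measure X) :
    Prop :=
  ∀ H : Subgroup G, (H : Set G).Infinite → IsErgodicAction (fun (h : H) x => a (h : G) x) μ

/-- `φ` is a measure space isomorphism from `(X,μ)` to `(Y,ν)`: a measure preserving
measurable map admitting an a.e. two-sided measurable inverse. -/
def IsMeasureIso [MeasurableSpace X] [MeasurableSpace Y] (μ : Measure X) (ν : Measure Y)
    (φ : X → Y) : Prop :=
  MeasurePreserving φ μ ν ∧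
    ∃ ψ : Y → X, Measurable ψ ∧ (∀ᵐ x ∂μ, ψ (φ x) = x) ∧ (∀ᵐ y ∂ν, φ (ψ y) = y)

/-- `φ` is an orbit equivalence between the actions `a : G → X → X` and `b : H → Y → Y`:
a measure space isomorphism with `φ(G⬝x) = H⬝φ(x)` for a.e. `x`. -/
def IsOrbitEquivalence {G H : Type} [MeasurableSpace X] [MeasurableSpace Y]
    (a : G → X → X) (b : H → Y → Y) (μ : Measure X) (ν : Measure Y) (φ : X → Y) : Prop :=
  IsMeasureIso μ ν φ ∧
    ∀ᵐ x ∂μ, (∀ g : G, ∃ h : H, φ (a g x) = b h (φ x)) ∧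
      (∀ h : H, ∃ g : G, b h (φ x) = φ (a g x))

/-- The two actions are orbit equivalent. -/
def OrbitEquivalentActions {G H : Type} [MeasurableSpace X] [MeasurableSpace Y]
    (a : G → X → X) (b : H → Y → Y) (μ : Measure X) (ν : Measure Y) : Prop :=
  ∃ φ : X → Y, IsOrbitEquivalence a b μ ν φ

/-- `m` is the product, over the index set `ι`, of copies of the probability measure `ν`. -/
def IsProductMeasure {ι : Type} [MeasurableSpace X] (ν : Measure X) (m : Measure (ι → X)) :
    Prop :=
  IsProbabilityMeasure m ∧
    ∀ (s : Finset ι) (A : ι → Set X), (∀ i, MeasurableSet (A i)) →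
      m {x | ∀ i ∈ s, x i ∈ A i} = ∏ i ∈ s, ν (A i)

/-- A group is amenable if it admits a left translation invariant, finitely additive
probability measure defined on all of its subsets. -/
def IsAmenable (G : Type) [Group G] : Prop :=
  ∃ m : Set G → ℝ,
    (∀ A : Set G, 0 ≤ m A) ∧ m Set.univ = 1 ∧
    (∀ A B : Set G, Disjoint A B → m (A ∪ B) = m A + m B) ∧
    ∀ (g : G) (A : Set G), m ((g * ·) '' A) = m A

/-! ### Bundled p.m.p. actions on standard probability spaces -/

/-- A p.m.p. action of `G` on a standard probability space, bundled. -/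
structure PmpSystem (G : Type) [Group G] : Type 1 where
  (X : Type)
  [mX : MeasurableSpace X]
  (μ : Measure X)
  (act : G → X → X)
  (standardBorel : StandardBorelSpace X)
  (isProb : IsProbabilityMeasure μ)
  (pmp : IsMpAction act μ)

/-- The bundled action is (essentially) free. -/
def PmpSystem.Free {G : Type} [Group G] (S : PmpSystem G) : Prop :=
  ∀ᵐ x ∂S.μ, ∀ g : G, S.act g x = x → g = 1

/-- The bundled action is ergodic. -/
def PmpSystem.ErgodicAct {G : Type} [Group G] (S : PmpSystem G) : Prop :=
  ∀ A : Set S.X, MeasurableSet[S.mX] A → (∀ g : G, S.act g ⁻¹' A = A) → S.μ A = 0 ∨ S.μ Aᶜ = 0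

/-- Two countable groups are orbit equivalent if they admit orbit equivalent free ergodic
p.m.p. actions on standard probability spaces. -/
def GroupsOrbitEquivalent (G H : Type) [Group G] [Group H] : Prop :=
  ∃ (S : PmpSystem G) (T : PmpSystem H),
    letI := S.mX
    letI := T.mX
    S.Free ∧ T.Free ∧ S.ErgodicAct ∧ T.ErgodicAct ∧
      OrbitEquivalentActions S.act T.act S.μ T.μ

/-! ### Measure equivalence -/

/-- `s` is a measurable fundamental domain for the action `a` on `(Ω, m)`. -/
def IsFundDomain {G Ω : Type} [MeasurableSpace Ω] (a : G → Ω → Ω) (s : Set Ω)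
    (m : Measure Ω) : Prop :=
  MeasurableSet s ∧ (∀ᵐ x ∂m, ∃ g : G, a g x ∈ s) ∧
    ∀ g g' : G, g ≠ g' → m (a g '' s ∩ a g' '' s) = 0

/-- A measure equivalence coupling of `G` with `H`: commuting measure preserving actions on
a standard nonzero σ-finite measure space, each admitting a finite measure measurable
fundamental domain. -/
structure MECoupling (G H : Type) [Group G] [Group H] : Type 1 where
  (Ω : Type)
  [mΩ : MeasurableSpace Ω]
  (m : Measure Ω)
  (aG : G → Ω → Ω)
  (aH : H → Ω → Ω)
  (standardBorel : StandardBorelSpace Ω)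
  (sigmaFinite : SigmaFinite m)
  (nonzero : m ≠ 0)
  (mpG : IsMpAction aG m)
  (mpH : IsMpAction aH m)
  (comm : ∀ (g : G) (h : H) (x : Ω), aG g (aH h x) = aH h (aG g x))
  (FG : Set Ω)
  (FH : Set Ω)
  (fundG : IsFundDomain aG FG m)
  (fundH : IsFundDomain aH FH m)
  (finG : m FG < ⊤)
  (finH : m FH < ⊤)

/-- `G` and `H` are measure equivalent. -/
def MeasureEquivalent (G H : Type) [Group G] [Group H] : Prop :=
  Nonempty (MECoupling G H)

/-- `G` and `H` admit a measure equivalence coupling of coupling index `α`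
(the ratio of the measures of the `H`- and `G`-fundamental domains). -/
def MeasureEquivalentWithIndex (G H : Type) [Group G] [Group H] (α : ℝ≥0∞) : Prop :=
  ∃ c : MECoupling G H, c.m c.FH = α * c.m c.FG



variable {X : Type}

/-! ### Countable Borel equivalence relations and measurable splittings -/

/-- `R` is a p.m.p. countable Borel equivalence relation on `(X, μ)`: every Borel bijection
between Borel subsets whose graph is contained in `R` preserves `μ`. -/
def IsPmpCBER [MeasurableSpace X] (R : X → X → Prop) (μ : Measure X) : Prop :=
  Equivalence R ∧ MeasurableSet {p : X × X | R p.1 p.2} ∧ (∀ x, {y | R x y}.Countable) ∧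
    ∀ (f : X → X) (A B : Set X), Measurable f → MeasurableSet A → MeasurableSet B →
      Set.BijOn f A B → (∀ x ∈ A, R x (f x)) →
      ∀ C : Set X, MeasurableSet C → C ⊆ B → μ (A ∩ f ⁻¹' C) = μ C

/-- The relation `R` is ergodic with respect to `μ`. -/
def IsErgodicRel [MeasurableSpace X] (R : X → X → Prop) (μ : Measure X) : Prop :=
  ∀ A : Set X, MeasurableSet A → (∀ x y, R x y → (x ∈ A ↔ y ∈ A)) → μ A = 0 ∨ μ Aᶜ = 0

/-- The subrelations `R₀` and `R₁` are freely independent: there is no reduced cycle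
alternating between nontrivial `R₀`-steps and `R₁`-steps. -/
def FreelyIndepRel (R₀ R₁ : X → X → Prop) : Prop :=
  ¬ ∃ (n : ℕ) (i : ℕ → Fin 2) (x : ℕ → X),
      2 ≤ n ∧ x n = x 0 ∧ (∀ j < n, x j ≠ x (j + 1)) ∧
      (∀ j, j + 1 < n → i j ≠ i (j + 1)) ∧
      (∀ j < n, if i j = 0 then R₀ (x j) (x (j + 1)) else R₁ (x j) (x (j + 1)))

/-- `R` splits as the free product `R = R₀ ∗ R₁`: `R₀` and `R₁` are freely independent
subequivalence relations generating `R`. -/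
def SplitsAs (R R₀ R₁ : X → X → Prop) : Prop :=
  Equivalence R₀ ∧ Equivalence R₁ ∧ (∀ x y, R₀ x y → R x y) ∧ (∀ x y, R₁ x y → R x y) ∧
    FreelyIndepRel R₀ R₁ ∧
    ∀ x y, R x y ↔ Relation.EqvGen (fun u v => R₀ u v ∨ R₁ u v) x y

/-- The splitting `R = R₀ ∗ R₁` is inessential on the (invariant) set `C`. -/
def InessentialOn [MeasurableSpace X] (R R₀ R₁ : X → X → Prop) (C : Set X) : Prop :=
  ∃ X₀ X₁ : Set X, MeasurableSet X₀ ∧ MeasurableSet X₁ ∧ X₀ ∪ X₁ = C ∧ Disjoint X₀ X₁ ∧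
    (∀ x ∈ C, ∀ y ∈ C, R x y → (x ∈ X₀ ↔ y ∈ X₀)) ∧
    ∃ U₀ U₁ : Set X, MeasurableSet U₀ ∧ MeasurableSet U₁ ∧ U₀ ⊆ X₀ ∧ U₁ ⊆ X₁ ∧
      (∀ x ∈ X₀, ∃ y ∈ U₀, R x y) ∧ (∀ x ∈ X₁, ∃ y ∈ U₁, R x y) ∧
      (∀ x ∈ U₀, ∀ y ∈ U₀, (R x y ↔ R₀ x y)) ∧ (∀ x ∈ U₁, ∀ y ∈ U₁, (R x y ↔ R₁ x y))

/-- The splitting is `μ`-essential: there is no `R`-invariant `μ`-conull Borel set on which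
it is inessential. -/
def MuEssential [MeasurableSpace X] (μ : Measure X) (R R₀ R₁ : X → X → Prop) : Prop :=
  ¬ ∃ C : Set X, MeasurableSet C ∧ μ Cᶜ = 0 ∧ (∀ x y, R x y → (x ∈ C ↔ y ∈ C)) ∧
      InessentialOn R R₀ R₁ C

/-- `R = R₀ ∗ R₁` is a `μ`-essential splitting. -/
def EssentialSplitting [MeasurableSpace X] (μ : Measure X) (R R₀ R₁ : X → X → Prop) : Prop :=
  SplitsAs R R₀ R₁ ∧ MuEssential μ R R₀ R₁

/-- The orbit equivalence relation of an action given by `a`. -/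
def orbitRelOf {G : Type} (a : G → X → X) : X → X → Prop := fun x y => ∃ g : G, a g x = y

/-- The restriction of the relation `R` to the set `C` (extended by equality off `C`). -/
def restrictRel (R : X → X → Prop) (C : Set X) : X → X → Prop :=
  fun x y => x = y ∨ (R x y ∧ x ∈ C ∧ y ∈ C)

/-- `R` is hyperfinite: an increasing union of Borel equivalence relations with finite
classes. -/
def IsHyperfinite [MeasurableSpace X] (R : X → X → Prop) : Prop :=
  ∃ S : ℕ → X → X → Prop,
    (∀ n, Equivalence (S n)) ∧ (∀ n, MeasurableSet {p : X × X | S n p.1 p.2}) ∧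
    (∀ n x y, S n x y → S (n + 1) x y) ∧ (∀ n x, {y | S n x y}.Finite) ∧
    ∀ x y, R x y ↔ ∃ n, S n x y

/-- `R` is `μ`-amenable: off a `μ`-null set it is hyperfinite. -/
def MuAmenableRel [MeasurableSpace X] (R : X → X → Prop) (μ : Measure X) : Prop :=
  ∃ C : Set X, MeasurableSet C ∧ μ Cᶜ = 0 ∧ IsHyperfinite (restrictRel R C)

/-- `R` is `μ`-nowhere amenable: there is no positive measure Borel set on which the
restriction of `R` is amenable. -/
def MuNowhereAmenable [MeasurableSpace X] (R : X → X → Prop) (μ : Measure X) : Prop :=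
  ¬ ∃ A : Set X, MeasurableSet A ∧ 0 < μ A ∧
      ∃ C : Set X, MeasurableSet C ∧ C ⊆ A ∧ μ (A \ C) = 0 ∧
        IsHyperfinite (restrictRel R C)

/-- The symmetric irreflexive graph `E` has no cycles. -/
def HasNoGraphCycles (E : X → X → Prop) : Prop :=
  ¬ ∃ (n : ℕ) (x : ℕ → X), 3 ≤ n ∧ (∀ j < n, E (x j) (x (j + 1))) ∧ x n = x 0 ∧
      ∀ j < n, ∀ k < n, j ≠ k → x j ≠ x k

/-- `R` is treeable: it is generated by a Borel graphing whose connected components are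
acyclic. -/
def IsTreeable [MeasurableSpace X] (R : X → X → Prop) : Prop :=
  ∃ E : X → X → Prop,
    MeasurableSet {p : X × X | E p.1 p.2} ∧ (∀ x y, E x y → E y x) ∧ (∀ x, ¬ E x x) ∧
    (∀ x y, E x y → R x y) ∧ (∀ x y, R x y ↔ Relation.EqvGen E x y) ∧ HasNoGraphCycles E


/-- `Γ` admits an essential measurable splitting: some free p.m.p. action of `Γ` on a
standard probability space has orbit equivalence relation admitting a `μ`-essential
splitting (into Borel subequivalence relations). -/
def AdmitsEssentialMeasurableSplitting (Γ : Type) [Group Γ] : Prop :=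
  ∃ S : PmpSystem Γ, S.Free ∧
    ∃ R₀ R₁ : S.X → S.X → Prop,
      letI := S.mX
      MeasurableSet {p : S.X × S.X | R₀ p.1 p.2} ∧
      MeasurableSet {p : S.X × S.X | R₁ p.1 p.2} ∧
      EssentialSplitting S.μ (orbitRelOf S.act) R₀ R₁


variable {X Y Z : Type}

/-! ### Cocycles and superrigidity -/

/-- A measurable `L`-valued cocycle over the action `a`. -/
def IsCocycle {G L : Type} [Group G] [MeasurableSpace X] [Group L] [MeasurableSpace L]
    (a : G → X → X) (μ : Measure X) (c : G → X → L) : Prop :=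
  (∀ g : G, Measurable (c g)) ∧
    ∀ g h : G, ∀ᵐ x ∂μ, c (g * h) x = c g (a h x) * c h x

/-- Two cocycles are cohomologous. -/
def Cohomologous {G L : Type} [Group G] [MeasurableSpace X] [Group L] [MeasurableSpace L]
    (a : G → X → X) (μ : Measure X) (c₀ c₁ : G → X → L) : Prop :=
  ∃ f : X → L, Measurable f ∧ ∀ g : G, ∀ᵐ x ∂μ, f (a g x) * c₀ g x * (f x)⁻¹ = c₁ g x

/-- The action `a` is `L`-cocycle superrigid: every measurable `L`-valued cocycle is
cohomologous to a group homomorphism. -/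
def IsCocycleSuperrigid {G : Type} [Group G] [MeasurableSpace X]
    (L : Type) [Group L] [MeasurableSpace L] (a : G → X → X) (μ : Measure X) : Prop :=
  ∀ c : G → X → L, IsCocycle a μ c →
    ∃ ρ : G →* L, Cohomologous a μ c fun g _ => ρ g

/-- The action is `𝒢_ctble`-cocycle superrigid: `L`-cocycle superrigid for every countable
discrete group `L`. -/
def IsGctbleCocycleSuperrigid {G : Type} [Group G] [MeasurableSpace X]
    (a : G → X → X) (μ : Measure X) : Prop :=
  ∀ (L : Type) [Group L] [MeasurableSpace L] [MeasurableSingletonClass L],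
    Countable L → IsCocycleSuperrigid L a μ

/-- The action is strongly ergodic. -/
def IsStronglyErgodic {G : Type} [Group G] [MeasurableSpace X]
    (a : G → X → X) (μ : Measure X) : Prop :=
  ∀ A : ℕ → Set X, (∀ n, MeasurableSet (A n)) →
    (∀ g : G, Tendsto (fun n => μ (symmDiff (a g '' A n) (A n))) atTop (nhds 0)) →
    Tendsto (fun n => μ (A n) * μ (A n)ᶜ) atTop (nhds 0)

/-- Soficity of a group. -/
def IsSofic (G : Type) [Group G] : Prop :=
  ∀ (F : Finset G) (ε : ℝ), 0 < ε →
    ∃ (n : ℕ) (σ : G → Equiv.Perm (Fin n)),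
      (∀ g ∈ F, ∀ h ∈ F,
        (1 - ε) * n ≤ ((Finset.univ.filter fun i => σ (g * h) i = σ g (σ h i)).card : ℝ)) ∧
      ∀ g ∈ F, g ≠ 1 →
        (1 - ε) * n ≤ ((Finset.univ.filter fun i => σ g i ≠ i).card : ℝ)

/-! ### Internal free products -/

/-- `Γ` is the internal free product of its subgroups `Λ` and `H`: together they generate
`Γ` and no alternating product of nonidentity elements is the identity. -/
def IsInternalFreeProduct {Γ : Type} [Group Γ] (Λ H : Subgroup Γ) : Prop :=
  Λ ⊔ H = ⊤ ∧
    ∀ (n : ℕ) (w : Fin (n + 1) → Γ) (c : Fin (n + 1) → Bool),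
      (∀ i, w i ≠ 1) →
      (∀ i, if c i then w i ∈ Λ else w i ∈ H) →
      (∀ i : Fin n, c i.castSucc ≠ c i.succ) →
      (List.ofFn w).prod ≠ 1





/-! ### Cofinitely equivariant maps -/

/-- `x ∼_B y`: the functions differ in finitely many coordinates, and wherever they differ
the values lie in the same `B`-orbit. -/
def simRel (β : B → Y → Y) (x y : Γ → Y) : Prop :=
  {γ : Γ | x γ ≠ y γ}.Finite ∧ ∀ γ : Γ, x γ ≠ y γ → ∃ l : B, β l (x γ) = y γ

/-- `φ` is cofinitely equivariant with respect to the given actions of `B` and `C`. -/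
def CofinitelyEquivariant [Group Γ] [MeasurableSpace Y] (β : B → Y → Y) (χ : C → Z → Z)
    (νΓ : Measure (Γ → Y)) (φ : (Γ → Y) → (Γ → Z)) : Prop :=
  ∀ᵐ y ∂νΓ, ∀ x : Γ → Y, simRel β x y → ∀ γ : Γ,
    simRel χ (φ (shiftS γ x)) (shiftS γ (φ y))

/-- `φ` (with a.e. inverse `ψ`) is a bi-cofinitely equivariant measure space isomorphism. -/
def BiCofinitelyEquivariant [Group Γ] [MeasurableSpace Y] [MeasurableSpace Z]
    (β : B → Y → Y) (χ : C → Z → Z) (νΓ : Measure (Γ → Y)) (ηΓ : Measure (Γ → Z))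
    (φ : (Γ → Y) → (Γ → Z)) (ψ : (Γ → Z) → (Γ → Y)) : Prop :=
  MeasurePreserving φ νΓ ηΓ ∧ Measurable ψ ∧
    (∀ᵐ y ∂νΓ, ψ (φ y) = y) ∧ (∀ᵐ z ∂ηΓ, φ (ψ z) = z) ∧
    CofinitelyEquivariant β χ νΓ φ ∧ CofinitelyEquivariant χ β ηΓ ψ

/-! ### Stable orbit equivalence -/

/-- The actions `a` and `b` are stably orbit equivalent. -/
def StablyOrbitEquivalent {G H : Type} [MeasurableSpace X] [MeasurableSpace Y]
    (a : G → X → X) (b : H → Y → Y) (μ : Measure X) (ν : Measure Y) : Prop :=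
  ∃ (X₀ : Set X) (Y₀ : Set Y) (φ : X → Y),
    MeasurableSet X₀ ∧ MeasurableSet Y₀ ∧ 0 < μ X₀ ∧ 0 < ν Y₀ ∧
    (∀ᵐ x ∂μ.restrict X₀, φ x ∈ Y₀) ∧
    MeasurePreserving φ ((μ X₀)⁻¹ • μ.restrict X₀) ((ν Y₀)⁻¹ • ν.restrict Y₀) ∧
    (∃ ψ : Y → X, Measurable ψ ∧ (∀ᵐ x ∂μ.restrict X₀, ψ (φ x) = x) ∧
      (∀ᵐ y ∂ν.restrict Y₀, φ (ψ y) = y)) ∧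
    ∀ᵐ x ∂μ.restrict X₀,
      (∀ g : G, a g x ∈ X₀ → ∃ h : H, φ (a g x) = b h (φ x)) ∧
      (∀ h : H, b h (φ x) ∈ Y₀ → ∃ g : G, a g x ∈ X₀ ∧ φ (a g x) = b h (φ x))


section ProductMeasure

variable {ι : Type} [MeasurableSpace Y] [MeasurableSpace Z] {ν : Measure Y} {η : Measure Z}
  {m : Measure (ι → Y)} {m' : Measure (ι → Z)}

theorem IsProductMeasure.eq_infinitePi [IsProbabilityMeasure ν] (h : IsProductMeasure ν m) :
    m = Measure.infinitePi fun _ : ι => ν :=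
  Measure.eq_infinitePi _ fun s t ht => h.2 s t ht

theorem IsProductMeasure.measurePreserving_eval [IsProbabilityMeasure ν]
    (h : IsProductMeasure ν m) (i : ι) : MeasurePreserving (fun x => x i) m ν :=
  h.eq_infinitePi ▸ measurePreserving_eval_infinitePi _ i

theorem IsProductMeasure.ae_forall_apply [Countable ι] [IsProbabilityMeasure ν]
    (h : IsProductMeasure ν m) {p : Y → Prop} (hp : ∀ᵐ y ∂ν, p y) :
    ∀ᵐ x ∂m, ∀ i, p (x i) :=
  ae_all_iff.2 fun i => (h.measurePreserving_eval i).quasiMeasurePreserving.ae hp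

theorem IsProductMeasure.measurePreserving_piMap [IsProbabilityMeasure ν]
    [IsProbabilityMeasure η] (h : IsProductMeasure ν m) (h' : IsProductMeasure η m')
    {f : Y → Z} (hf : MeasurePreserving f ν η) :
    MeasurePreserving (fun x i => f (x i)) m m' := by
  refine ⟨measurable_pi_lambda _ fun i => hf.measurable.comp (measurable_pi_apply i), ?_⟩
  rw [h.eq_infinitePi, h'.eq_infinitePi, Measure.infinitePi_map_pi _ fun _ => hf.measurable,
    hf.map_eq]

theorem IsMeasureIso.piMap [Countable ι] [IsProbabilityMeasure ν] [IsProbabilityMeasure η]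
    (h : IsProductMeasure ν m) (h' : IsProductMeasure η m') {f : Y → Z}
    (hf : IsMeasureIso ν η f) : IsMeasureIso m m' fun x i => f (x i) := by
  obtain ⟨hf, g, hg, hgf, hfg⟩ := hf
  refine ⟨h.measurePreserving_piMap h' hf, fun z i => g (z i), by fun_prop, ?_, ?_⟩
  · filter_upwards [h.ae_forall_apply hgf] with y hy using funext hy
  · filter_upwards [h'.ae_forall_apply hfg] with z hz using funext hz

end ProductMeasure

/-- Coordinatewise choices of `χ`-elements assemble into an element of the wreath product
because the choice at a coordinate where `g` is trivial can be taken trivial. -/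
theorem exists_wreathSmul_rel [Group B] [Group C] [Group Γ] [MulAction Γ V]
    {β : B → Y → Y} {χ : C → Z → Z} (R : Y → Z → Prop) {u : V → Y} {w : V → Z}
    (h_one : ∀ v, R (β 1 (u v)) (χ 1 (w v)))
    (h : ∀ v (l : B), ∃ k : C, R (β l (u v)) (χ k (w v))) (g : pwreath V B Γ) :
    ∃ k : pwreath V C Γ, ∀ v, R (wreathSmul β g u v) (wreathSmul χ k w v) := by
  classical
  choose k hk using h
  let k₁ : V → B → C := fun v l => if l = 1 then 1 else k v l
  have hk₁ : ∀ v l, R (β l (u v)) (χ (k₁ v l) (w v)) := by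
    intro v l
    by_cases hl : l = 1
    · subst hl; simpa [k₁] using h_one v
    · simpa [k₁, hl] using hk v l
  have hsupp : (mulSupport fun v => k₁ (g.right⁻¹ • v) ((g.left : V → B) v)).Finite :=
    g.left.2.subset fun v hv hgv => hv (by simp [k₁, hgv])
  exact ⟨⟨⟨_, hsupp⟩, g.right⟩, fun v => hk₁ _ _⟩

theorem IsOrbitEquivalence.wreathSmul_piMap [Group B] [Group C] [Group Γ] [MulAction Γ V]
    [Countable V] [MeasurableSpace Y] [MeasurableSpace Z] {ν : Measure Y} {η : Measure Z}
    [IsProbabilityMeasure ν] [IsProbabilityMeasure η] {b : B → Y → Y} {c : C → Z → Z}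
    (hb : ∀ y, b 1 y = y) (hc : ∀ z, c 1 z = z) {φ : Y → Z}
    (hφ : IsOrbitEquivalence b c ν η φ)
    {νV : Measure (V → Y)} {ηV : Measure (V → Z)}
    (hνV : IsProductMeasure ν νV) (hηV : IsProductMeasure η ηV) :
    IsOrbitEquivalence (wreathSmul b : pwreath V B Γ → (V → Y) → (V → Y))
      (wreathSmul c : pwreath V C Γ → (V → Z) → (V → Z)) νV ηV fun y v => φ (y v) := by
  refine ⟨hφ.1.piMap hνV hηV, ?_⟩
  filter_upwards [hνV.ae_forall_apply hφ.2] with y hy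
  have h_one : ∀ v, φ (b 1 (y v)) = c 1 (φ (y v)) := by simp [hb, hc]
  constructor
  · intro g
    obtain ⟨k, hk⟩ := exists_wreathSmul_rel (fun y z => φ y = z) h_one (fun v => (hy v).1) g
    exact ⟨k, funext hk⟩
  · intro k
    obtain ⟨g, hg⟩ := exists_wreathSmul_rel (fun z y => z = φ y) (fun v => (h_one v).symm)
      (fun v => (hy v).2) k
    exact ⟨g, funext hg⟩

theorem coordinatewise_orbitEquivalence_of_wreath_actions_general
    (Γ B C Y Z : Type) [Group Γ] [Countable Γ] [Group B] [Group C]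
    [MeasurableSpace Y] [MeasurableSpace Z]
    (ν : Measure Y) (η : Measure Z) [IsProbabilityMeasure ν] [IsProbabilityMeasure η]
    (b : B → Y → Y) (c : C → Z → Z) (hb : IsPmpAction b ν) (hc : IsPmpAction c η)
    (φ : Y → Z) (hφ : IsOrbitEquivalence b c ν η φ)
    (νΓ : Measure (Γ → Y)) (ηΓ : Measure (Γ → Z))
    (hνΓ : IsProductMeasure ν νΓ) (hηΓ : IsProductMeasure η ηΓ) :
    IsOrbitEquivalence (wreathSmul b : wreath B Γ → (Γ → Y) → (Γ → Y))
      (wreathSmul c : wreath C Γ → (Γ → Z) → (Γ → Z)) νΓ ηΓ (fun y γ => φ (y γ)) ∧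
    OrbitEquivalentActions (wreathSmul b : wreath B Γ → (Γ → Y) → (Γ → Y))
      (wreathSmul c : wreath C Γ → (Γ → Z) → (Γ → Z)) νΓ ηΓ := by
  have h := hφ.wreathSmul_piMap (Γ := Γ) hb.2.1 hc.2.1 hνΓ hηΓ
  exact ⟨h, _, h⟩

/-- If `φ` is an orbit equivalence between p.m.p. actions of `B` on `(Y,ν)`
and of `C` on `(Z,η)`, then the coordinatewise map `φ^Γ` is an orbit equivalence between
the associated wreath product actions of `B ≀ Γ` and `C ≀ Γ`; in particular those actions
are orbit equivalent. -/
theorem coordinatewise_orbitEquivalence_of_wreath_actions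
    (Γ B C Y Z : Type) [Group Γ] [Countable Γ] [Group B] [Countable B] [Group C] [Countable C]
    [MeasurableSpace Y] [MeasurableSpace Z] [StandardBorelSpace Y] [StandardBorelSpace Z]
    (ν : Measure Y) (η : Measure Z) [IsProbabilityMeasure ν] [IsProbabilityMeasure η]
    (b : B → Y → Y) (c : C → Z → Z) (hb : IsPmpAction b ν) (hc : IsPmpAction c η)
    (φ : Y → Z) (hφ : IsOrbitEquivalence b c ν η φ)
    (νΓ : Measure (Γ → Y)) (ηΓ : Measure (Γ → Z))
    (hνΓ : IsProductMeasure ν νΓ) (hηΓ : IsProductMeasure η ηΓ) :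
    IsOrbitEquivalence (wreathSmul b : wreath B Γ → (Γ → Y) → (Γ → Y))
      (wreathSmul c : wreath C Γ → (Γ → Z) → (Γ → Z)) νΓ ηΓ (fun y γ => φ (y γ)) ∧
    OrbitEquivalentActions (wreathSmul b : wreath B Γ → (Γ → Y) → (Γ → Y))
      (wreathSmul c : wreath C Γ → (Γ → Z) → (Γ → Z)) νΓ ηΓ :=
  coordinatewise_orbitEquivalence_of_wreath_actions_general Γ B C Y Z ν η b c hb hc φ hφ νΓ ηΓ hνΓ
    hηΓ

end OEW
end

section
/- Let Γ be a group that is the internal free product Γ = Λ ∗ H of subgroups Λ and H. Then there exists a set S ⊆ Γ of left coset representatives for Λ in Γ (i.e., S contains exactly one element of each coset γΛ) such that hS = S for every h ∈ H, λS △ S = {λ, e} for every λ ∈ Λ∖{e}, and consequently γS △ S is finite for every γ ∈ Γ. -/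
/-!  Common definitions: wreath products, measured group actions, orbit equivalence,
measure equivalence, measurable splittings, cocycle superrigidity, and cofinitely
equivariant maps.  -/

open MeasureTheory Function Filter Set
open scoped ENNReal

/-! Normal forms identify `Γ` with the coproduct `Λ ∗ H`; take for `S` the elements whose
normal form does not end in a letter of `Λ`. Left multiplication by a letter rewrites only the
front of a word, so it keeps the last letter unless the whole word is absorbed: this gives
`hS = S` and `λ(S ∖ {1}) ⊆ S`, while appending a letter of `Λ` leaves `S`, so `S` meets every
coset `γΛ` exactly once and `λS △ S = {λ, 1}`. The `γ` with `γS △ S` finite form a subgroup,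
which contains `Λ` and `H`. -/

open Pointwise

variable {G : Type*} [Group G]

namespace Set

def almostStabilizer (S : Set G) : Subgroup G where
  carrier := {g | (symmDiff (g • S) S).Finite}
  one_mem' := by simp
  mul_mem' {g h} hg hh := by
    refine ((hh.smul_set (a := g)).union hg).subset ?_
    rw [mul_smul, smul_set_symmDiff]
    exact symmDiff_triangle _ (g • S) _
  inv_mem' {g} hg := by
    change (symmDiff (g⁻¹ • S) S).Finite
    rw [← inv_smul_smul g S, ← smul_set_symmDiff, inv_smul_smul, symmDiff_comm]
    exact hg.smul_set

end Set

/-- For the left factor `Λ` and right factor `H` of `Λ ∗ H`, the properties of the set of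
elements whose normal form does not end in a letter of `Λ`. -/
structure IsFreeFactorTransversal (Λ H : Subgroup G) (S : Set G) : Prop where
  one_mem : (1 : G) ∈ S
  mul_mem_of_mem_right : ∀ h ∈ H, ∀ s ∈ S, h * s ∈ S
  mul_mem_of_mem_left : ∀ a ∈ Λ, ∀ s ∈ S, s ≠ 1 → a * s ∈ S
  mul_notMem_of_mem_left : ∀ s ∈ S, ∀ a ∈ Λ, a ≠ 1 → s * a ∉ S

namespace IsFreeFactorTransversal

variable {Λ H : Subgroup G} {S : Set G}

theorem notMem_of_mem_left (hS : IsFreeFactorTransversal Λ H S) {a : G} (ha : a ∈ Λ)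
    (ha1 : a ≠ 1) : a ∉ S := by
  simpa using hS.mul_notMem_of_mem_left 1 hS.one_mem a ha ha1

theorem exists_mem_inv_mul_mem (hS : IsFreeFactorTransversal Λ H S) (hsup : Λ ⊔ H = ⊤)
    (γ : G) : ∃ s ∈ S, γ⁻¹ * s ∈ Λ := by
  -- the representative of `γΛ` moves along with `γ`, except that `1` absorbs letters of `Λ`
  have step : ∀ g ∈ (Λ : Set G) ∪ H, ∀ γ : G, (∃ s ∈ S, γ⁻¹ * s ∈ Λ) →
      ∃ s ∈ S, (g * γ)⁻¹ * s ∈ Λ := by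
    rintro g hg γ ⟨s, hs, hγs⟩
    rw [mul_inv_rev]
    rcases hg with hg | hg
    · by_cases hs1 : s = 1
      · subst hs1
        exact ⟨1, hS.one_mem, by simpa using Λ.mul_mem hγs (Λ.inv_mem hg)⟩
      · exact ⟨g * s, hS.mul_mem_of_mem_left g hg s hs hs1, by simpa [mul_assoc]⟩
    · exact ⟨g * s, hS.mul_mem_of_mem_right g hg s hs, by simpa [mul_assoc]⟩
  have hγ : γ ∈ Subgroup.closure ((Λ : Set G) ∪ H) := by
    simp [Subgroup.closure_union, hsup]
  induction hγ using Subgroup.closure_induction_left with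
  | one => exact ⟨1, hS.one_mem, by simp⟩
  | mul_left g hg γ _ ih => exact step g hg γ ih
  | inv_mul_cancel g hg γ _ ih =>
    refine step g⁻¹ ?_ γ ih
    rcases hg with hg | hg
    exacts [Or.inl (Λ.inv_mem hg), Or.inr (H.inv_mem hg)]

theorem eq_of_inv_mul_mem (hS : IsFreeFactorTransversal Λ H S) {s s' : G} (hs : s ∈ S)
    (hs' : s' ∈ S) (hss' : s⁻¹ * s' ∈ Λ) : s = s' := by
  by_contra hne
  refine hS.mul_notMem_of_mem_left s hs _ hss' (fun h => hne ?_) (by simpa using hs')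
  rwa [inv_mul_eq_one] at h

theorem existsUnique (hS : IsFreeFactorTransversal Λ H S) (hsup : Λ ⊔ H = ⊤) (γ : G) :
    ∃! s, s ∈ S ∧ γ⁻¹ * s ∈ Λ := by
  obtain ⟨s, hs, hγs⟩ := hS.exists_mem_inv_mul_mem hsup γ
  refine ⟨s, ⟨hs, hγs⟩, fun s' ⟨hs', hγs'⟩ => (hS.eq_of_inv_mul_mem hs hs' ?_).symm⟩
  simpa [mul_assoc] using Λ.mul_mem (Λ.inv_mem hγs) hγs'

theorem smul_eq (hS : IsFreeFactorTransversal Λ H S) {h : G} (hh : h ∈ H) : h • S = S := by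
  refine (Set.smul_set_subset_iff.2 fun s hs => hS.mul_mem_of_mem_right h hh s hs).antisymm
    fun s hs => ⟨h⁻¹ * s, hS.mul_mem_of_mem_right _ (H.inv_mem hh) s hs, by simp⟩

theorem symmDiff_smul (hS : IsFreeFactorTransversal Λ H S) {a : G} (ha : a ∈ Λ)
    (ha1 : a ≠ 1) : symmDiff (a • S) S = {a, 1} := by
  ext x
  rw [Set.mem_symmDiff, Set.mem_smul_set_iff_inv_smul_mem, smul_eq_mul]
  by_cases hxa : x = a
  · subst hxa
    simp [hS.one_mem, hS.notMem_of_mem_left ha ha1]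
  by_cases hx1 : x = 1
  · subst hx1
    simp [hS.one_mem, hS.notMem_of_mem_left (Λ.inv_mem ha) (inv_ne_one.2 ha1)]
  have hmem : a⁻¹ * x ∈ S ↔ x ∈ S :=
    ⟨fun h => by
        simpa using hS.mul_mem_of_mem_left a ha _ h (by rwa [Ne, inv_mul_eq_one, eq_comm]),
      fun h => hS.mul_mem_of_mem_left _ (Λ.inv_mem ha) x h hx1⟩
  simp [hmem, hxa, hx1]

theorem almostStabilizer_eq_top (hS : IsFreeFactorTransversal Λ H S) (hsup : Λ ⊔ H = ⊤) :
    Set.almostStabilizer S = ⊤ := by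
  refine top_le_iff.1 (hsup ▸ sup_le (fun a ha => ?_) fun h hh => ?_)
  · by_cases ha1 : a = 1
    · simp [ha1]
    · change (symmDiff (a • S) S).Finite
      simp [hS.symmDiff_smul ha ha1]
  · change (symmDiff (h • S) S).Finite
    simp [hS.smul_eq hh]

end IsFreeFactorTransversal

namespace Monoid.CoprodI

variable {ι : Type*} {M : ι → Type*} [∀ i, Monoid (M i)]

namespace Word

def lastIdx (w : Word M) : Option ι := w.toList.getLast?.map Sigma.fst

theorem lastIdx_eq_none {w : Word M} : w.lastIdx = none ↔ w = empty := by
  simp [lastIdx, Word.ext_iff]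

def concat (w : Word M) {i : ι} (m : M i) (hw : w.lastIdx ≠ some i) (h1 : m ≠ 1) : Word M where
  toList := w.toList ++ [⟨i, m⟩]
  ne_one l hl := by
    rcases List.mem_append.1 hl with hl | hl
    · exact w.ne_one l hl
    · rwa [List.mem_singleton.1 hl]
  chain_ne := List.isChain_append.2 ⟨w.chain_ne, List.isChain_singleton _, fun l hl l' hl' => by
    rw [List.head?_singleton, Option.mem_some_iff] at hl'
    subst hl'
    exact fun h => hw (by rw [lastIdx, Option.mem_def.1 hl, Option.map_some, h])⟩

theorem prod_concat (w : Word M) {i : ι} (m : M i) (hw : w.lastIdx ≠ some i) (h1 : m ≠ 1) :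
    (w.concat m hw h1).prod = w.prod * of m := by
  simp [concat, prod]

theorem lastIdx_concat (w : Word M) {i : ι} (m : M i) (hw : w.lastIdx ≠ some i) (h1 : m ≠ 1) :
    (w.concat m hw h1).lastIdx = some i := by
  simp [concat, lastIdx]

variable [∀ i, DecidableEq (M i)]

theorem toList_rcons {i : ι} (p : Pair M i) :
    (rcons p).toList = p.tail.toList ∨ (rcons p).toList = ⟨i, p.head⟩ :: p.tail.toList := by
  unfold rcons
  split_ifs <;> simp

theorem lastIdx_rcons_of_tail_ne_empty {i : ι} (p : Pair M i) (h : p.tail ≠ empty) :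
    (rcons p).lastIdx = p.tail.lastIdx := by
  have hne : p.tail.toList ≠ [] := fun h' => h (Word.ext h')
  rcases toList_rcons p with h' | h' <;>
    simp only [lastIdx, h', List.getLast?_cons_of_ne_nil hne]

theorem eq_of_mem_lastIdx_rcons_of_tail_eq_empty {i : ι} (p : Pair M i) (h : p.tail = empty) :
    ∀ j ∈ (rcons p).lastIdx, j = i := by
  rcases toList_rcons p with h' | h' <;> simp [lastIdx, h', h]

variable [DecidableEq ι]

theorem lastIdx_of_smul_eq_or {j : ι} (m : M j) (w : Word M) :
    (of m • w).lastIdx = w.lastIdx ∨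
      (∀ k ∈ (of m • w).lastIdx, k = j) ∧ ∀ k ∈ w.lastIdx, k = j := by
  have hw : rcons (equivPair j w) = w := (equivPair j).symm_apply_apply w
  by_cases ht : (equivPair j w).tail = empty
  · refine Or.inr ⟨eq_of_mem_lastIdx_rcons_of_tail_eq_empty _ ht, ?_⟩
    rw [← hw]
    exact eq_of_mem_lastIdx_rcons_of_tail_eq_empty _ ht
  · left
    calc (of m • w).lastIdx = (equivPair j w).tail.lastIdx := lastIdx_rcons_of_tail_ne_empty _ ht
      _ = w.lastIdx := by
        conv_rhs => rw [← hw]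
        exact (lastIdx_rcons_of_tail_ne_empty _ ht).symm

end Word

variable [DecidableEq ι] [∀ i, DecidableEq (M i)]

def notEndingIn (i : ι) : Set (CoprodI M) := {x | (Word.equiv x).lastIdx ≠ some i}

theorem one_mem_notEndingIn (i : ι) : (1 : CoprodI M) ∈ notEndingIn i := by
  simp [notEndingIn, Word.equiv, Word.lastIdx]

theorem of_mul_mem_notEndingIn {i j : ι} {x : CoprodI M} (hx : x ∈ notEndingIn i) (m : M j)
    (h : j ≠ i ∨ x ≠ 1) : of m * x ∈ notEndingIn i := by
  have hequiv : Word.equiv (of m * x) = of m • Word.equiv x := by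
    simp only [Word.equiv, Equiv.coe_fn_mk, mul_smul]
  change (Word.equiv x).lastIdx ≠ some i at hx
  change (Word.equiv (of m * x)).lastIdx ≠ some i
  rw [hequiv]
  rcases Word.lastIdx_of_smul_eq_or m (Word.equiv x) with hlast | ⟨hsmul, hword⟩
  · rwa [hlast]
  by_cases hji : j = i
  · subst hji
    have hx1 : Word.equiv x ≠ Word.empty := fun hw =>
      h.resolve_left (not_not.2 rfl) (by rw [← Word.equiv.symm_apply_apply x, hw]; rfl)
    obtain ⟨k, hk⟩ := Option.ne_none_iff_exists'.1 (Word.lastIdx_eq_none.not.2 hx1)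
    exact absurd (hk.trans (congrArg some (hword k hk))) hx
  · exact fun hi => hji (hsmul i hi).symm

theorem mul_of_notMem_notEndingIn {i : ι} {x : CoprodI M} (hx : x ∈ notEndingIn i) {m : M i}
    (h1 : m ≠ 1) : x * of m ∉ notEndingIn i := by
  change (Word.equiv x).lastIdx ≠ some i at hx
  have hprod : x * of m = ((Word.equiv x).concat m hx h1).prod := by
    rw [Word.prod_concat]
    exact congrArg (· * of m) (Word.equiv.symm_apply_apply x).symm
  have hword : Word.equiv (x * of m) = (Word.equiv x).concat m hx h1 := by
    rw [hprod]
    exact Word.equiv.apply_symm_apply _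
  simp [notEndingIn, hword, Word.lastIdx_concat]

end Monoid.CoprodI

namespace OEW

namespace IsInternalFreeProduct

variable {Γ : Type} [Group Γ] {Λ H : Subgroup Γ}

open Monoid

theorem list_prod_ne_one (hsplit : IsInternalFreeProduct Λ H) {L : List (Γ × Bool)}
    (hL : L ≠ []) (hmem : ∀ p ∈ L, p.1 ≠ 1 ∧ p.1 ∈ cond p.2 Λ H)
    (hchain : L.IsChain fun p q => p.2 ≠ q.2) : (L.map Prod.fst).prod ≠ 1 := by
  obtain ⟨n, hn⟩ : ∃ n, L.length = n + 1 := Nat.exists_eq_succ_of_ne_zero (by simpa using hL)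
  let p : Fin (n + 1) → Γ × Bool := fun k => L[k.1]'(by omega)
  have hofFn : List.ofFn (fun k => (p k).1) = L.map Prod.fst :=
    List.ext_getElem (by simp [hn]) fun k _ _ => by
      simp only [List.getElem_ofFn, List.getElem_map, p]
  rw [← hofFn]
  refine hsplit.2 n _ (fun k => (p k).2) (fun k => (hmem _ (List.getElem_mem _)).1)
    (fun k => ?_) (fun k => List.isChain_iff_getElem.1 hchain k (by omega))
  have := (hmem (p k) (List.getElem_mem _)).2
  cases h : (p k).2 <;> simp_all

theorem bijective_lift (hsplit : IsInternalFreeProduct Λ H) :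
    Function.Bijective (CoprodI.lift fun b => (cond b Λ H).subtype) := by
  classical
  refine ⟨(injective_iff_map_eq_one _).2 fun x hx => ?_, MonoidHom.range_eq_top.1 ?_⟩
  · by_contra hx1
    set w := CoprodI.Word.equiv x
    have hw : w.prod = x := CoprodI.Word.equiv.symm_apply_apply x
    have hne : w.toList ≠ [] := fun h => hx1 (by rw [← hw, CoprodI.Word.prod, h]; rfl)
    refine hsplit.list_prod_ne_one (L := w.toList.map fun l => ((l.2 : Γ), l.1))
      (by simpa using hne) ?_ ((List.isChain_map _).2 w.chain_ne) ?_
    · simp only [List.mem_map]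
      rintro _ ⟨l, hl, rfl⟩
      exact ⟨by simpa using w.ne_one l hl, l.2.2⟩
    · rw [← hx, ← hw, CoprodI.Word.prod, map_list_prod, List.map_map, List.map_map]
      simp [Function.comp_def]
  · rw [CoprodI.range_eq_iSup, iSup_bool_eq]
    simpa using hsplit.1

theorem exists_isFreeFactorTransversal (hsplit : IsInternalFreeProduct Λ H) :
    ∃ S : Set Γ, IsFreeFactorTransversal Λ H S := by
  classical
  let e := MulEquiv.ofBijective _ hsplit.bijective_lift
  have he : ∀ (b : Bool) (a : Γ) (ha : a ∈ cond b Λ H),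
      e.symm a = CoprodI.of (M := fun b => ↥(cond b Λ H)) ⟨a, ha⟩ := fun b a ha =>
    e.symm_apply_eq.2 (by simp [e])
  refine ⟨e.symm ⁻¹' CoprodI.notEndingIn true, ⟨?_, ?_, ?_, ?_⟩⟩
  · simpa using CoprodI.one_mem_notEndingIn true
  · intro h hh s hs
    rw [Set.mem_preimage, map_mul, he false h hh]
    exact CoprodI.of_mul_mem_notEndingIn hs _ (Or.inl Bool.false_ne_true)
  · intro a ha s hs hs1
    rw [Set.mem_preimage, map_mul, he true a ha]
    exact CoprodI.of_mul_mem_notEndingIn hs _ (Or.inr (by simpa using hs1))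
  · intro s hs a ha ha1
    rw [Set.mem_preimage, map_mul, he true a ha]
    exact CoprodI.mul_of_notMem_notEndingIn hs (by simpa using ha1)

end IsInternalFreeProduct

/-- If `Γ = Λ ∗ H` is an internal free product, then there is a set `S`
of left coset representatives for `Λ` in `Γ` with `hS = S` for `h ∈ H`,
`λS △ S = {λ, e}` for `λ ∈ Λ \ {e}`, and consequently `γS △ S` finite for every `γ`. -/
theorem exists_almost_invariant_coset_reps_of_free_factor
    (Γ : Type) [Group Γ] (Λ H : Subgroup Γ) (hsplit : IsInternalFreeProduct Λ H) :
    ∃ S : Set Γ,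
      (∀ γ : Γ, ∃! s : Γ, s ∈ S ∧ γ⁻¹ * s ∈ Λ) ∧
      (∀ h : Γ, h ∈ H → (h * ·) '' S = S) ∧
      (∀ l : Γ, l ∈ Λ → l ≠ 1 → symmDiff ((l * ·) '' S) S = {l, 1}) ∧
      ∀ γ : Γ, (symmDiff ((γ * ·) '' S) S).Finite := by
  obtain ⟨S, hS⟩ := hsplit.exists_isFreeFactorTransversal
  refine ⟨S, hS.existsUnique hsplit.1, fun h hh => hS.smul_eq hh,
    fun l hl hl1 => hS.symmDiff_smul hl hl1, fun γ => ?_⟩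
  change γ ∈ S.almostStabilizer
  simp [hS.almostStabilizer_eq_top hsplit.1]

end OEW
end
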